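/- arXiv:2011.04603 — 4 statements merged into one kernel-verified Lean document; each statement's English description precedes it below -/
import Mathlib

section
/- Let X be a topological space, A ⊆ X a finite subset, and let a_1, …, a_m ∈ A be points lying in pairwise distinct path components of X such that every point of A lies in the same path component as some a_i. Then for every group G there is a bijection between the set of functors Π(X,A) → BG and the product (∏_{i=1}^m Hom(π₁(X,a_i), G)) × G^{A ∖ {a_1,…,a_m}}, where π₁(X,a_i) is the fundamental group of X at a_i and the last factor is the set of functions from A ∖ {a_1,…,a_m} to G. -/
/-! Fix a basepoint `aᵢ` in each component and, for every object `x`, an arrow `pₓ` from the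
basepoint of its component to `x`, the identity at the basepoints themselves. Conjugation by these
arrows is a retraction of the groupoid onto the disjoint union of its vertex groups at the `aᵢ`,
and every functor `F` to `BG` is the retraction followed by the restriction of `F`, conjugated
by `x ↦ F(pₓ)`. Since `F(pₓ) = 1` at basepoints, the values of `F` at the remaining `pₓ` are free,
and they together with the restrictions to the `π₁(X, aᵢ)` determine `F`. -/

open CategoryTheory

/-- The fundamental groupoid of `X` with basepoints in `A`: the full subcategory of the
fundamental groupoid of `X` on the points of `A`. -/
abbrev RestrictedFundamentalGroupoid (X : Type*) [TopologicalSpace X] (A : Set X) :=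
  ObjectProperty.FullSubcategory (fun x : FundamentalGroupoid X => x.as ∈ A)

namespace CategoryTheory

noncomputable instance ObjectProperty.FullSubcategory.groupoid {D : Type*} [Groupoid D]
    (P : ObjectProperty D) : Groupoid P.FullSubcategory :=
  Groupoid.ofFullyFaithfulToGroupoid P.ι P.fullyFaithfulι

lemma SingleObj.eqToHom_eq_one {M : Type*} [Monoid M] {x y : SingleObj M} (h : x = y) :
    eqToHom h = (1 : M) := by
  subst h
  rfl

section EndomorphismsOnly

variable {D : Type*} [Category D] {M : Type*} [Monoid M] (hD : ∀ {i j : D}, (i ⟶ j) → i = j)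

def functorToSingleObjOfEnd (φ : ∀ i : D, End i →* M) : D ⥤ SingleObj M where
  obj _ := SingleObj.star M
  map {i _} f := φ i (f ≫ eqToHom (hD f).symm)
  map_id i := by
    simp only [Category.id_comp, eqToHom_refl]
    exact (φ i).map_one
  map_comp {i j k} f g := by
    obtain rfl := hD f
    obtain rfl := hD g
    simp only [eqToHom_refl, Category.comp_id, SingleObj.comp_as_mul, ← map_mul, End.mul_def]

def functorToSingleObjEquivPiEnd : (D ⥤ SingleObj M) ≃ ∀ i : D, End i →* M where
  toFun F i := (SingleObj.toEnd M).symm.toMonoidHom.comp (F.mapEnd i)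
  invFun := functorToSingleObjOfEnd hD
  left_inv F := Functor.ext (fun _ => rfl) fun i j f => by
    obtain rfl := hD f
    change F.map (f ≫ eqToHom _) = _
    simp
  right_inv φ := by
    ext i f
    change φ i (f ≫ eqToHom _) = φ i f
    simp

end EndomorphismsOnly

section Conjugate

variable {C : Type*} [Category C] {G : Type*} [Group G]

@[simps]
def Functor.conjugate (F : C ⥤ SingleObj G) (g : C → G) : C ⥤ SingleObj G where
  obj _ := SingleObj.star G
  map {x y} f := g y * F.map f * (g x)⁻¹
  map_id x := by rw [F.map_id, SingleObj.id_as_one, SingleObj.id_as_one, mul_one, mul_inv_cancel]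
  map_comp f f' := by
    simp only [Functor.map_comp, SingleObj.comp_as_mul]
    group

end Conjugate

structure IsComponentTransversal {C ι : Type*} [Category C] (b : ι → C) : Prop where
  eq_of_hom {i j : ι} : (b i ⟶ b j) → i = j
  nonempty_hom (x : C) : ∃ i, Nonempty (b i ⟶ x)

lemma _root_.Function.extend_val_compl_range_apply {α ι M : Type*} [One M] {b : ι → α}
    (g : {x // x ∉ Set.range b} → M) (i : ι) : Function.extend Subtype.val g 1 (b i) = 1 :=
  Function.extend_apply' _ _ _ fun ⟨x, hx⟩ => x.2 ⟨i, hx.symm⟩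

namespace IsComponentTransversal

lemma eq_of_inducedCategory_hom {C ι : Type*} [Category C] {b : ι → C}
    (hb : IsComponentTransversal b) {i j : InducedCategory C b} (f : i ⟶ j) : i = j :=
  hb.eq_of_hom f.hom

variable {C ι : Type*} [Groupoid C] {b : ι → C} (hb : IsComponentTransversal b)

noncomputable def root (x : C) : ι := (hb.nonempty_hom x).choose

lemma root_eq_of_hom {i : ι} {x : C} (f : b i ⟶ x) : hb.root x = i :=
  hb.eq_of_hom ((hb.nonempty_hom x).choose_spec.some ≫ inv f)

lemma root_basepoint (i : ι) : hb.root (b i) = i := hb.root_eq_of_hom (𝟙 _)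

open Classical in
noncomputable def fromRoot (x : C) : b (hb.root x) ⟶ x :=
  if h : x ∈ Set.range b then
    eqToHom (by obtain ⟨i, rfl⟩ := h; rw [hb.root_basepoint])
  else (hb.nonempty_hom x).choose_spec.some

lemma fromRoot_basepoint (i : ι) : hb.fromRoot (b i) = eqToHom (by rw [hb.root_basepoint]) :=
  dif_pos ⟨i, rfl⟩

noncomputable def retraction : C ⥤ InducedCategory C b where
  obj := hb.root
  map {x y} f := InducedCategory.homMk (hb.fromRoot x ≫ f ≫ inv (hb.fromRoot y))
  map_id x := by ext; simp
  map_comp f g := by ext; simp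

lemma retraction_obj (x : C) : hb.retraction.obj x = hb.root x := rfl

lemma retraction_obj_basepoint (i : ι) : hb.retraction.obj (b i) = i := hb.root_basepoint i

lemma retraction_map_basepoint {i j : ι} (f : b i ⟶ b j) :
    hb.retraction.map f =
      eqToHom (hb.retraction_obj_basepoint i) ≫ InducedCategory.homMk f ≫
        eqToHom (hb.retraction_obj_basepoint j).symm := by
  ext
  rw [InducedCategory.comp_hom, InducedCategory.comp_hom, InducedCategory.eqToHom_hom,
    InducedCategory.eqToHom_hom]
  simp [retraction, fromRoot_basepoint]

lemma retraction_map_fromRoot (x : C) :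
    hb.retraction.map (hb.fromRoot x) =
      eqToHom ((hb.retraction_obj_basepoint (hb.root x)).trans (hb.retraction_obj x).symm) := by
  ext
  rw [InducedCategory.eqToHom_hom]
  simp [retraction, fromRoot_basepoint]

variable {G : Type*} [Group G]

lemma conjugate_retraction_comp (F : C ⥤ SingleObj G) :
    (hb.retraction ⋙ inducedFunctor b ⋙ F).conjugate (fun x => F.map (hb.fromRoot x)) = F := by
  refine Functor.ext (fun _ => rfl) fun x y f => ?_
  simp only [Functor.conjugate_map, Functor.comp_map, retraction, inducedFunctor_map,
    InducedCategory.homMk_hom, Functor.map_comp, Functor.map_inv, SingleObj.inv_as_inv,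
    SingleObj.comp_as_mul, eqToHom_refl, SingleObj.id_as_one]
  group

lemma extend_map_fromRoot (F : C ⥤ SingleObj G) :
    Function.extend Subtype.val
        (fun x : {x // x ∉ Set.range b} => (F.map (hb.fromRoot x) : G)) 1 =
      fun x => F.map (hb.fromRoot x) := by
  funext x
  by_cases hx : x ∈ Set.range b
  · obtain ⟨i, rfl⟩ := hx
    rw [Function.extend_val_compl_range_apply, fromRoot_basepoint, eqToHom_map,
      SingleObj.eqToHom_eq_one]
  · exact Subtype.val_injective.extend_apply _ _ ⟨x, hx⟩

noncomputable def functorEquiv :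
    (C ⥤ SingleObj G) ≃ (InducedCategory C b ⥤ SingleObj G) × ({x // x ∉ Set.range b} → G) where
  toFun F := (inducedFunctor b ⋙ F, fun x => F.map (hb.fromRoot x))
  invFun Ψg := (hb.retraction ⋙ Ψg.1).conjugate (Function.extend Subtype.val Ψg.2 1)
  left_inv F := by
    dsimp only
    rw [extend_map_fromRoot]
    exact hb.conjugate_retraction_comp F
  right_inv := fun ⟨Ψ, g⟩ => by
    refine Prod.ext (Functor.ext (fun _ => rfl) fun i j f => ?_) (funext fun x => ?_)
    · simp only [Functor.comp_map, inducedFunctor_map, Functor.conjugate_map,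
        retraction_map_basepoint]
      rw [Functor.map_comp, Functor.map_comp, eqToHom_map, eqToHom_map]
      simp only [SingleObj.eqToHom_eq_one, inducedFunctor_obj, SingleObj.comp_as_mul,
        Function.extend_val_compl_range_apply, one_mul, mul_one, inv_one]
      rfl
    · simp only [Functor.conjugate_map, Functor.comp_map, retraction_map_fromRoot,
        Function.extend_val_compl_range_apply, Subtype.val_injective.extend_apply]
      rw [eqToHom_map, SingleObj.eqToHom_eq_one, inv_one, mul_one, mul_one]

end IsComponentTransversal

end CategoryTheory

namespace RestrictedFundamentalGroupoid

variable {X : Type*} [TopologicalSpace X] {A : Set X}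

lemma nonempty_hom_iff_joined {x y : RestrictedFundamentalGroupoid X A} :
    Nonempty (x ⟶ y) ↔ Joined x.obj.as y.obj.as :=
  ⟨fun ⟨f⟩ => Path.Homotopic.Quotient.ind (motive := fun _ => Joined _ _) (fun γ => ⟨γ⟩) f.hom,
    fun h => ⟨ObjectProperty.homMk (Path.Homotopic.Quotient.mk h.somePath)⟩⟩

lemma isComponentTransversal {m : ℕ} {a : Fin m → X} (ha : ∀ i, a i ∈ A)
    (hdist : ∀ i j : Fin m, i ≠ j → ¬ Joined (a i) (a j))
    (hcover : ∀ x ∈ A, ∃ i : Fin m, Joined (a i) x) :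
    IsComponentTransversal (fun i => (⟨⟨a i⟩, ha i⟩ : RestrictedFundamentalGroupoid X A)) where
  eq_of_hom {i j} f := by_contra fun hij => hdist i j hij (nonempty_hom_iff_joined.mp ⟨f⟩)
  nonempty_hom x := (hcover x.obj.as x.property).imp fun _ h => nonempty_hom_iff_joined.mpr h

noncomputable def inducedEndEquiv {ι : Type*} (b : ι → RestrictedFundamentalGroupoid X A)
    (i : ι) : End (C := InducedCategory _ b) i ≃* FundamentalGroup X (b i).obj.as :=
  ((fullyFaithfulInducedFunctor b).comp (ObjectProperty.fullyFaithfulι _)).mulEquivEnd i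

def complRangeEquiv {ι : Type*} (a : ι → X) (ha : ∀ i, a i ∈ A) :
    {x // x ∉ Set.range (fun i => (⟨⟨a i⟩, ha i⟩ : RestrictedFundamentalGroupoid X A))} ≃
      ↥(A \ Set.range a) where
  toFun x := ⟨x.1.obj.as, x.1.property, fun ⟨i, hi⟩ =>
    x.2 ⟨i, ObjectProperty.FullSubcategory.ext (congrArg FundamentalGroupoid.mk hi)⟩⟩
  invFun y := ⟨⟨⟨y.1⟩, y.2.1⟩, fun ⟨i, hi⟩ => y.2.2 ⟨i, congrArg (·.obj.as) hi⟩⟩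
  left_inv _ := rfl
  right_inv _ := rfl

end RestrictedFundamentalGroupoid

theorem representation_variety_product_decomposition_general
    (X : Type*) [TopologicalSpace X] (A : Set X)
    (m : ℕ) (a : Fin m → X) (ha : ∀ i, a i ∈ A)
    (hdist : ∀ i j : Fin m, i ≠ j → ¬ Joined (a i) (a j))
    (hcover : ∀ x ∈ A, ∃ i : Fin m, Joined (a i) x)
    (G : Type*) [Group G] :
    Nonempty ((RestrictedFundamentalGroupoid X A ⥤ SingleObj G) ≃
      ((∀ i : Fin m, FundamentalGroup X (a i) →* G) × (↥(A \ Set.range a) → G))) := by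
  have hb := RestrictedFundamentalGroupoid.isComponentTransversal ha hdist hcover
  exact ⟨hb.functorEquiv.trans <| Equiv.prodCongr
    ((functorToSingleObjEquivPiEnd hb.eq_of_inducedCategory_hom).trans <|
      Equiv.piCongrRight fun i =>
        MulEquiv.monoidHomCongrLeftEquiv (RestrictedFundamentalGroupoid.inducedEndEquiv _ i))
    ((RestrictedFundamentalGroupoid.complRangeEquiv a ha).arrowCongr (Equiv.refl G))⟩

/-- If `A ⊆ X` is finite and `a₁, …, a_m ∈ A` lie in pairwise distinct path
components of `X`, with every point of `A` in the same path component as some `aᵢ`, then for every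
group `G` the functors `Π(X,A) ⥤ BG` are in bijection with
`(∏ᵢ Hom(π₁(X,aᵢ), G)) × G^{A ∖ {a₁,…,a_m}}`. -/
theorem representation_variety_product_decomposition
    (X : Type*) [TopologicalSpace X] (A : Set X) (hA : A.Finite)
    (m : ℕ) (a : Fin m → X) (ha : ∀ i, a i ∈ A)
    (hdist : ∀ i j : Fin m, i ≠ j → ¬ Joined (a i) (a j))
    (hcover : ∀ x ∈ A, ∃ i : Fin m, Joined (a i) x)
    (G : Type*) [Group G] :
    Nonempty ((RestrictedFundamentalGroupoid X A ⥤ SingleObj G) ≃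
      ((∀ i : Fin m, FundamentalGroup X (a i) →* G) × (↥(A \ Set.range a) → G))) :=
  representation_variety_product_decomposition_general X A m a ha hdist hcover G
end

section
/- Let n ≥ 1 and let W be a compact Hausdorff topological space that is locally Euclidean of dimension n (a closed topological n-manifold). Let W' be a Hausdorff topological space, f : W → W' a continuous surjection, and p' ∈ W' a point such that the fiber f⁻¹(p') = {p₁, …, p_r} consists of exactly r ≥ 1 points and every point of W' ∖ {p'} has exactly one preimage under f. Then there exist an open neighborhood V of p' in W' and a homeomorphism from Cone(S^{n-1} ⊔ ⋯ ⊔ S^{n-1}) (the cone over the disjoint union of r copies of the unit sphere S^{n-1} ⊆ ℝ^n) onto V sending the vertex of the cone to p'. -/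
/-!
Choose a chart ball around each `p i`, the balls having pairwise disjoint images in `W`. Polar
coordinates in the `r` balls followed by `f` give a continuous map from the closed cone over `r`
spheres to `W'` which identifies exactly the points collapsed to the vertex, since `f` only glues
the centres. The closed cone is compact and `W'` is Hausdorff, so this is a closed embedding, and it
restricts to an embedding of the open cone, an open subspace. Its image is `f` of the union of the
open balls, which is open: the union is `f`-saturated, and `f` is a quotient map, being a closed
surjection.
-/

open Set Metric Topology Function

/-- The setoid on `B × [0,1)` collapsing `B × {0}` to a point. -/
def ConeSetoid (B : Type*) : Setoid (B × {t : ℝ // t ∈ Set.Ico (0 : ℝ) 1}) where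
  r p q := p = q ∨ ((p.2 : ℝ) = 0 ∧ (q.2 : ℝ) = 0)
  iseqv := by
    refine ⟨fun _ => Or.inl rfl, ?_, ?_⟩
    · rintro p q (rfl | ⟨h1, h2⟩)
      · exact Or.inl rfl
      · exact Or.inr ⟨h2, h1⟩
    · rintro p q r (rfl | ⟨h1, h2⟩) (rfl | ⟨h3, h4⟩) <;> tauto

/-- The topological cone over `B`: the quotient `(B × [0,1)) / (B × {0})`. -/
abbrev Cone (B : Type*) : Type _ := Quotient (ConeSetoid B)

def ClosedConeSetoid (B : Type*) : Setoid (B × Icc (0 : ℝ) 1) where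
  r p q := p = q ∨ ((p.2 : ℝ) = 0 ∧ (q.2 : ℝ) = 0)
  iseqv := by
    refine ⟨fun _ => Or.inl rfl, ?_, ?_⟩
    · rintro p q (rfl | ⟨h1, h2⟩)
      · exact Or.inl rfl
      · exact Or.inr ⟨h2, h1⟩
    · rintro p q r (rfl | ⟨h1, h2⟩) (rfl | ⟨h3, h4⟩) <;> tauto

abbrev ClosedCone (B : Type*) : Type _ := Quotient (ClosedConeSetoid B)

namespace Cone

variable {B : Type*}

def inclIcc : B × Ico (0 : ℝ) 1 → B × Icc (0 : ℝ) 1 :=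
  Prod.map id (inclusion Ico_subset_Icc_self)

theorem injective_inclIcc : Injective (inclIcc (B := B)) :=
  injective_id.prodMap (inclusion_injective _)

def toClosedCone : Cone B → ClosedCone B :=
  Quotient.map' inclIcc fun _ _ h => h.imp (congrArg inclIcc) id

theorem injective_toClosedCone : Injective (toClosedCone (B := B)) := by
  rintro ⟨a⟩ ⟨b⟩ h
  exact Quotient.sound ((Quotient.exact h).imp (fun h => injective_inclIcc h) id)

theorem preimage_image_toClosedCone (s : Set (Cone B)) :
    Quotient.mk _ ⁻¹' (toClosedCone '' s) = inclIcc '' (Quotient.mk _ ⁻¹' s) := by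
  ext ⟨b, t⟩
  refine ⟨?_, fun ⟨a, ha, hat⟩ => ⟨_, ha, hat ▸ rfl⟩⟩
  · rintro ⟨⟨a⟩, ha, hta⟩
    rcases Quotient.exact hta with h | ⟨ha0, ht0⟩
    · exact ⟨a, ha, h⟩
    · refine ⟨(b, ⟨0, le_rfl, one_pos⟩), ?_, Prod.ext rfl (Subtype.ext ht0.symm)⟩
      rwa [mem_preimage, Quotient.sound (Or.inr ⟨rfl, ha0⟩ : ConeSetoid B _ a)]

variable {X : Type*} {g : B × Icc (0 : ℝ) 1 → X}

def liftIcc (g : B × Icc (0 : ℝ) 1 → X) (hg : ∀ a b, ClosedConeSetoid B a b → g a = g b) :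
    Cone B → X :=
  Quotient.lift g hg ∘ toClosedCone

theorem range_liftIcc (hg : ∀ a b, ClosedConeSetoid B a b → g a = g b) :
    range (liftIcc g hg) = g '' {a | (a.2 : ℝ) < 1} := by
  ext x
  constructor
  · rintro ⟨⟨a⟩, rfl⟩
    exact ⟨inclIcc a, a.2.2.2, rfl⟩
  · rintro ⟨⟨b, t⟩, ht, rfl⟩
    exact ⟨Quotient.mk _ (b, ⟨t, t.2.1, ht⟩), rfl⟩

variable [TopologicalSpace B]

theorem isOpenEmbedding_inclIcc : IsOpenEmbedding (inclIcc (B := B)) := by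
  refine IsOpenEmbedding.id.prodMap (.inclusion _ ?_)
  convert (isOpen_Iio (a := (1 : ℝ))).preimage
    (continuous_subtype_val (p := (· ∈ Icc (0 : ℝ) 1))) using 1
  ext x
  simp [x.2.1]

theorem isOpenEmbedding_toClosedCone : IsOpenEmbedding (toClosedCone (B := B)) := by
  refine .of_continuous_injective_isOpenMap
    ((continuous_quot_mk.comp isOpenEmbedding_inclIcc.continuous).quotient_lift _)
    injective_toClosedCone fun s hs => ?_
  rw [← isQuotientMap_quotient_mk'.isOpen_preimage]
  exact (preimage_image_toClosedCone s).symm ▸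
    isOpenEmbedding_inclIcc.isOpenMap _ (hs.preimage continuous_quotient_mk')

theorem isEmbedding_liftIcc [CompactSpace B] [TopologicalSpace X] [T2Space X]
    (hg : ∀ a b, ClosedConeSetoid B a b → g a = g b) (hcont : Continuous g)
    (hinj : ∀ a b, g a = g b → ClosedConeSetoid B a b) : IsEmbedding (liftIcc g hg) := by
  have hinj' : Injective (Quotient.lift g hg) := by
    rintro ⟨a⟩ ⟨b⟩ h
    exact Quotient.sound (hinj a b h)
  exact ((hcont.quotient_lift hg).isClosedEmbedding hinj').isEmbedding.comp
    isOpenEmbedding_toClosedCone.isEmbedding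

end Cone

section Charts

variable {E W : Type*} [TopologicalSpace W]

theorem exists_openPartialHomeomorph_mem_target [TopologicalSpace E]
    (hW : ∀ x : W, ∃ (U : Set W) (V : Set E),
      IsOpen U ∧ x ∈ U ∧ IsOpen V ∧ Nonempty (U ≃ₜ V))
    (x : W) : ∃ φ : OpenPartialHomeomorph E W, x ∈ φ.target := by
  obtain ⟨U, V, hU, hxU, hV, ⟨h⟩⟩ := hW x
  have : Nonempty V := ⟨h ⟨x, hxU⟩⟩
  have : Nonempty W := ⟨x⟩
  have hj : IsOpenEmbedding fun v : V => (h.symm v : W) :=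
    hU.isOpenEmbedding_subtypeVal.comp h.symm.isOpenEmbedding
  exact ⟨(hj.toOpenPartialHomeomorph _).lift_openEmbedding hV.isOpenEmbedding_subtypeVal,
    h ⟨x, hxU⟩, by simp⟩

theorem OpenPartialHomeomorph.exists_closedBall_subset_source [NormedAddCommGroup E]
    [NormedSpace ℝ E] (φ : OpenPartialHomeomorph E W) {x : W} (hx : x ∈ φ.target) {O : Set W}
    (hO : IsOpen O) (hxO : x ∈ O) :
    ∃ ψ : OpenPartialHomeomorph E W,
      closedBall 0 1 ⊆ ψ.source ∧ ψ 0 = x ∧ ψ.target ⊆ O := by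
  set σ := φ.symm.restrOpen O hO
  have hxσ : x ∈ σ.source := ⟨hx, hxO⟩
  obtain ⟨ε, hε, hεσ⟩ :=
    nhds_basis_closedBall.mem_iff.1 (σ.open_target.mem_nhds (σ.map_source hxσ))
  let A : E ≃ₜ E := (Homeomorph.smulOfNeZero ε hε.ne').trans (Homeomorph.addLeft (σ x))
  refine ⟨A.transOpenPartialHomeomorph σ.symm, fun v hv => hεσ ?_, ?_, ?_⟩
  · simpa [A, norm_smul, abs_of_pos hε] using
      mul_le_of_le_one_right hε.le (mem_closedBall_zero_iff.1 hv)
  · simpa [A] using σ.left_inv hxσ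
  · exact fun y hy => hy.2

theorem OpenPartialHomeomorph.apply_eq_apply_iff_of_pairwise_disjoint [TopologicalSpace E]
    {ι : Type*} {φ : ι → OpenPartialHomeomorph E W}
    (hdisj : Pairwise (Disjoint on fun i => (φ i).target)) {i j : ι} {v v' : E}
    (hv : v ∈ (φ i).source) (hv' : v' ∈ (φ j).source) :
    φ i v = φ j v' ↔ i = j ∧ v = v' := by
  refine ⟨fun h => ?_, fun ⟨hij, hvv'⟩ => hij ▸ hvv' ▸ rfl⟩
  obtain rfl : i = j := hdisj.eq <| not_disjoint_iff.2
    ⟨φ i v, (φ i).map_source hv, h ▸ (φ j).map_source hv'⟩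
  exact ⟨rfl, (φ i).injOn hv hv' h⟩

end Charts

theorem Function.Injective.exists_isOpen_pairwise_disjoint {X ι : Type*} [TopologicalSpace X]
    [T2Space X] [Finite ι] {p : ι → X} (hp : Injective p) :
    ∃ O : ι → Set X, (∀ i, p i ∈ O i ∧ IsOpen (O i)) ∧ Pairwise (Disjoint on O) :=
  Pairwise.exists_mem_filter_basis_of_disjoint (fun _ _ hij => disjoint_nhds_nhds.2 (hp.ne hij))
    fun i => nhds_basis_opens (p i)

section Fiber

variable {X Y : Type*} {f : X → Y} {y : Y}

theorem apply_eq_apply_iff_of_injOn_compl (hinj : InjOn f (f ⁻¹' {y})ᶜ) {a b : X} :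
    f a = f b ↔ a = b ∨ (f a = y ∧ f b = y) := by
  refine ⟨fun h => ?_, ?_⟩
  · by_cases ha : f a = y
    · exact Or.inr ⟨ha, h ▸ ha⟩
    · exact Or.inl (hinj ha (h ▸ ha : f b ≠ y) h)
  · rintro (rfl | ⟨ha, hb⟩)
    · rfl
    · exact ha.trans hb.symm

theorem preimage_image_eq_of_injOn_compl (hinj : InjOn f (f ⁻¹' {y})ᶜ) {U : Set X}
    (hU : f ⁻¹' {y} ⊆ U) : f ⁻¹' (f '' U) = U := by
  refine (subset_preimage_image f U).antisymm' fun x ⟨u, hu, hux⟩ => ?_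
  rcases (apply_eq_apply_iff_of_injOn_compl hinj).1 hux with rfl | ⟨-, hx⟩
  exacts [hu, hU hx]

end Fiber

section SphereCone

variable {E : Type*} [NormedAddCommGroup E] [NormedSpace ℝ E]

theorem smul_mem_closedBall_zero_one {t : ℝ} (ht : t ∈ Icc (0 : ℝ) 1) {s : E}
    (hs : s ∈ sphere 0 1) : t • s ∈ closedBall (0 : E) 1 := by
  rw [mem_sphere_zero_iff_norm] at hs
  rw [mem_closedBall_zero_iff, norm_smul, hs, mul_one, Real.norm_of_nonneg ht.1]
  exact ht.2

theorem smul_eq_smul_iff_of_mem_sphere {s s' : E} (hs : s ∈ sphere 0 1) (hs' : s' ∈ sphere 0 1)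
    {t t' : ℝ} (ht : 0 ≤ t) (ht' : 0 ≤ t') :
    t • s = t' • s' ↔ t = t' ∧ (t = 0 ∨ s = s') := by
  rw [mem_sphere_zero_iff_norm] at hs hs'
  refine ⟨fun h => ?_, ?_⟩
  · have htt' : t = t' := by
      simpa [norm_smul, hs, hs', abs_of_nonneg ht, abs_of_nonneg ht'] using congrArg norm h
    subst htt'
    exact ⟨rfl, or_iff_not_imp_left.2 fun h0 => smul_right_injective E h0 h⟩
  · rintro ⟨rfl, rfl | rfl⟩ <;> simp

theorem exists_smul_eq_of_mem_ball [Nontrivial E] {v : E} (hv : v ∈ ball (0 : E) 1) :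
    ∃ s ∈ sphere (0 : E) 1, ∃ t ∈ Ico (0 : ℝ) 1, t • s = v := by
  rw [mem_ball_zero_iff] at hv
  obtain rfl | hv0 := eq_or_ne v 0
  · obtain ⟨s, hs⟩ := NormedSpace.sphere_nonempty (x := (0 : E)).2 zero_le_one
    exact ⟨s, hs, 0, ⟨le_rfl, one_pos⟩, zero_smul ℝ s⟩
  · refine ⟨‖v‖⁻¹ • v, ?_, ‖v‖, ⟨norm_nonneg v, hv⟩, ?_⟩
    · simp [norm_smul, hv0]
    · simp [smul_smul, hv0]

variable {W ι : Type*} [TopologicalSpace W]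

def sphereConeMap (φ : ι → OpenPartialHomeomorph E W) :
    (Σ _ : ι, sphere (0 : E) 1) × Icc (0 : ℝ) 1 → W :=
  fun a => φ a.1.1 ((a.2 : ℝ) • (a.1.2 : E))

variable {φ : ι → OpenPartialHomeomorph E W}

theorem continuous_sphereConeMap (hball : ∀ i, closedBall 0 1 ⊆ (φ i).source) :
    Continuous (sphereConeMap φ) := by
  have : Continuous fun y : Σ i : ι, sphere (0 : E) 1 × Icc (0 : ℝ) 1 =>
      φ y.1 ((y.2.2 : ℝ) • (y.2.1 : E)) :=
    continuous_sigma fun i => (φ i).continuousOn.comp_continuous (by fun_prop)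
      fun y => hball i (smul_mem_closedBall_zero_one y.2.2 y.1.2)
  exact this.comp Homeomorph.sigmaProdDistrib.continuous

theorem image_sphereConeMap_lt_one [Nontrivial E] :
    sphereConeMap φ '' {a | (a.2 : ℝ) < 1} = ⋃ i, φ i '' ball 0 1 := by
  ext x
  simp only [mem_image, mem_iUnion]
  constructor
  · rintro ⟨⟨⟨i, s, hs⟩, t, ht⟩, ht1, rfl⟩
    refine ⟨i, t • s, ?_, rfl⟩
    rw [mem_sphere_zero_iff_norm] at hs
    rwa [mem_ball_zero_iff, norm_smul, hs, mul_one, Real.norm_of_nonneg ht.1]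
  · rintro ⟨i, v, hv, rfl⟩
    obtain ⟨s, hs, t, ht, rfl⟩ := exists_smul_eq_of_mem_ball hv
    exact ⟨(⟨i, s, hs⟩, ⟨t, ht.1, ht.2.le⟩), ht.2, rfl⟩

variable (hball : ∀ i, closedBall 0 1 ⊆ (φ i).source)
  (hdisj : Pairwise (Disjoint on fun i => (φ i).target))
include hball hdisj

theorem sphereConeMap_eq_sphereConeMap_iff
    {a b : (Σ _ : ι, sphere (0 : E) 1) × Icc (0 : ℝ) 1} :
    sphereConeMap φ a = sphereConeMap φ b ↔
      a = b ∨ (a.1.1 = b.1.1 ∧ (a.2 : ℝ) = 0 ∧ (b.2 : ℝ) = 0) := by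
  obtain ⟨⟨i, s, hs⟩, t, ht⟩ := a
  obtain ⟨⟨j, s', hs'⟩, t', ht'⟩ := b
  simp only [sphereConeMap, OpenPartialHomeomorph.apply_eq_apply_iff_of_pairwise_disjoint hdisj
    (hball i (smul_mem_closedBall_zero_one ht hs)) (hball j (smul_mem_closedBall_zero_one ht' hs')),
    smul_eq_smul_iff_of_mem_sphere hs hs' ht.1 ht'.1]
  constructor
  · rintro ⟨rfl, rfl, rfl | rfl⟩
    · exact Or.inr ⟨rfl, rfl, rfl⟩
    · exact Or.inl rfl
  · rintro (h | ⟨rfl, h0, h0'⟩) <;> simp_all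

theorem sphereConeMap_mem_range_iff {a : (Σ _ : ι, sphere (0 : E) 1) × Icc (0 : ℝ) 1} :
    sphereConeMap φ a ∈ range (fun i => φ i 0) ↔ (a.2 : ℝ) = 0 := by
  obtain ⟨⟨i, s, hs⟩, t, ht⟩ := a
  have h0 : ∀ j, (0 : E) ∈ (φ j).source := fun j => hball j (mem_closedBall_self zero_le_one)
  simp only [mem_range, sphereConeMap, OpenPartialHomeomorph.apply_eq_apply_iff_of_pairwise_disjoint
    hdisj (h0 _) (hball i (smul_mem_closedBall_zero_one ht hs))]
  simp [eq_comm (a := (0 : E)), ne_zero_of_mem_sphere one_ne_zero ⟨s, hs⟩]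

variable {Y : Type*} {f : W → Y} {y : Y} (hfib : f ⁻¹' {y} = range fun i => φ i 0)
include hfib

theorem apply_sphereConeMap_eq_iff (a : (Σ _ : ι, sphere (0 : E) 1) × Icc (0 : ℝ) 1) :
    f (sphereConeMap φ a) = y ↔ (a.2 : ℝ) = 0 := by
  rw [← sphereConeMap_mem_range_iff hball hdisj, ← hfib]
  rfl

theorem apply_sphereConeMap_eq_apply_sphereConeMap_iff (hinj : InjOn f (f ⁻¹' {y})ᶜ)
    (a b : (Σ _ : ι, sphere (0 : E) 1) × Icc (0 : ℝ) 1) :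
    f (sphereConeMap φ a) = f (sphereConeMap φ b) ↔
      a = b ∨ ((a.2 : ℝ) = 0 ∧ (b.2 : ℝ) = 0) := by
  rw [apply_eq_apply_iff_of_injOn_compl hinj, apply_sphereConeMap_eq_iff hball hdisj hfib,
    apply_sphereConeMap_eq_iff hball hdisj hfib, sphereConeMap_eq_sphereConeMap_iff hball hdisj]
  tauto

end SphereCone

theorem normalization_local_structure_general (n : ℕ) (hn : 1 ≤ n)
    (W : Type*) [TopologicalSpace W] [CompactSpace W] [T2Space W]
    (hW : ∀ x : W, ∃ (U : Set W) (V : Set (EuclideanSpace ℝ (Fin n))),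
      IsOpen U ∧ x ∈ U ∧ IsOpen V ∧ Nonempty (↥U ≃ₜ ↥V))
    (W' : Type*) [TopologicalSpace W'] [T2Space W']
    (f : W → W') (hf : Continuous f) (hsurj : Function.Surjective f)
    (p' : W') (r : ℕ) (p : Fin r → W) (hpinj : Function.Injective p)
    (hfiber : f ⁻¹' {p'} = Set.range p)
    (hinj : ∀ w' : W', w' ≠ p' → ∃! w : W, f w = w') :
    ∃ V : Set W', IsOpen V ∧ p' ∈ V ∧
      ∃ φ : Cone (Σ _ : Fin r, ↥(Metric.sphere (0 : EuclideanSpace ℝ (Fin n)) 1)) ≃ₜ ↥V,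
        ∀ b : Σ _ : Fin r, ↥(Metric.sphere (0 : EuclideanSpace ℝ (Fin n)) 1),
          ((φ (Quotient.mk (ConeSetoid _) (b, ⟨0, le_rfl, one_pos⟩)) : ↥V) : W') = p' := by
  have : Nonempty (Fin n) := ⟨⟨0, hn⟩⟩
  obtain ⟨O, hO, hOdisj⟩ := hpinj.exists_isOpen_pairwise_disjoint
  choose φ hball hφp hφO using fun i =>
    have hχ := exists_openPartialHomeomorph_mem_target hW (p i)
    hχ.choose.exists_closedBall_subset_source hχ.choose_spec (hO i).2 (hO i).1
  have hdisj : Pairwise (Disjoint on fun i => (φ i).target) :=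
    fun i j hij => (hOdisj hij).mono (hφO i) (hφO j)
  have hinj' : InjOn f (f ⁻¹' {p'})ᶜ := fun x hx _ _ hxy => (hinj _ hx).unique rfl hxy.symm
  have hfiber' : f ⁻¹' {p'} = range fun i => φ i 0 := by simp [hfiber, hφp]
  have hker := apply_sphereConeMap_eq_apply_sphereConeMap_iff hball hdisj hfiber' hinj'
  set Φ := Cone.liftIcc (f ∘ sphereConeMap φ) fun a b => (hker a b).2
  have hemb : IsEmbedding Φ := Cone.isEmbedding_liftIcc _
    (hf.comp (continuous_sphereConeMap hball)) fun a b => (hker a b).1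
  set Ub := ⋃ i, φ i '' ball 0 1
  have hfiberUb : f ⁻¹' {p'} ⊆ Ub := hfiber' ▸ range_subset_iff.2 fun i =>
    mem_iUnion.2 ⟨i, 0, mem_ball_self one_pos, rfl⟩
  have hrange : range Φ = f '' Ub :=
    (Cone.range_liftIcc _).trans (by rw [image_comp, image_sphereConeMap_lt_one])
  refine ⟨range Φ, ?_, ?_, hemb.toHomeomorph, fun b =>
    (apply_sphereConeMap_eq_iff hball hdisj hfiber' (b, ⟨0, le_rfl, zero_le_one⟩)).2 rfl⟩
  · rw [hrange, ← (hf.isClosedMap.isQuotientMap hf hsurj).isOpen_preimage,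
      preimage_image_eq_of_injOn_compl hinj' hfiberUb]
    exact isOpen_iUnion fun i => (φ i).isOpen_image_of_subset_source isOpen_ball
      (ball_subset_closedBall.trans (hball i))
  · obtain ⟨w, rfl⟩ := hsurj p'
    exact hrange ▸ mem_image_of_mem f (hfiberUb rfl)

/-- Let `W` be a closed topological `n`-manifold, `W'` a Hausdorff space and
`f : W → W'` a continuous surjection which is injective away from a point `p'` whose fiber
consists of exactly `r ≥ 1` points. Then `p'` has an open neighborhood `V` in `W'` homeomorphic to
the cone over the disjoint union of `r` copies of `S^{n-1}`, the vertex being sent to `p'`. -/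
theorem normalization_local_structure (n : ℕ) (hn : 1 ≤ n)
    (W : Type*) [TopologicalSpace W] [CompactSpace W] [T2Space W]
    (hW : ∀ x : W, ∃ (U : Set W) (V : Set (EuclideanSpace ℝ (Fin n))),
      IsOpen U ∧ x ∈ U ∧ IsOpen V ∧ Nonempty (↥U ≃ₜ ↥V))
    (W' : Type*) [TopologicalSpace W'] [T2Space W']
    (f : W → W') (hf : Continuous f) (hsurj : Function.Surjective f)
    (p' : W') (r : ℕ) (hr : 1 ≤ r) (p : Fin r → W) (hpinj : Function.Injective p)
    (hfiber : f ⁻¹' {p'} = Set.range p)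
    (hinj : ∀ w' : W', w' ≠ p' → ∃! w : W, f w = w') :
    ∃ V : Set W', IsOpen V ∧ p' ∈ V ∧
      ∃ φ : Cone (Σ _ : Fin r, ↥(Metric.sphere (0 : EuclideanSpace ℝ (Fin n)) 1)) ≃ₜ ↥V,
        ∀ b : Σ _ : Fin r, ↥(Metric.sphere (0 : EuclideanSpace ℝ (Fin n)) 1),
          ((φ (Quotient.mk (ConeSetoid _) (b, ⟨0, le_rfl, one_pos⟩)) : ↥V) : W') = p' :=
  normalization_local_structure_general n hn W hW W' f hf hsurj p' r p hpinj hfiber hinj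
end

section
/- Let k be a field and g ≥ 0. For i = 1, …, g let A_i = !![λ_i, α_i; 0, λ_i⁻¹] and B_i = !![μ_i, β_i; 0, μ_i⁻¹] be upper-triangular matrices in SL₂(k), with λ_i, μ_i ∈ kˣ and α_i, β_i ∈ k. Then ∏_{i=1}^{g} [A_i, B_i] = !![1, S; 0, 1], where S = Σ_{i=1}^{g} ( μ_i β_i (λ_i² − 1) + λ_i α_i (1 − μ_i²) ). In particular, ∏_{i=1}^{g} [A_i, B_i] equals the identity matrix if and only if Σ_{i=1}^{g} ( μ_i β_i (λ_i² − 1) + λ_i α_i (1 − μ_i²) ) = 0; this is the defining equation of the tuples of upper-triangular matrices lying in the SL₂(k)-representation variety of a closed orientable surface of genus g. -/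
/-!
The commutator of two upper-triangular matrices of determinant one is upper unitriangular, and
upper unitriangular matrices multiply by adding their corner entries, so the ordered product of
the commutators is the unitriangular matrix whose corner entry is the sum of theirs.
-/

section

variable {R : Type*} [CommRing R]

theorem inv_upperTriangular_units (u : Rˣ) (a : R) :
    (!![(u : R), a; 0, ↑u⁻¹])⁻¹ = !![↑u⁻¹, -a; 0, (u : R)] :=
  Matrix.inv_eq_right_inv <| by simp [Matrix.one_fin_two, mul_comm]

theorem commutator_upperTriangular_units (l m : Rˣ) (a b : R) :
    !![(l : R), a; 0, ↑l⁻¹] * !![(m : R), b; 0, ↑m⁻¹] * (!![(l : R), a; 0, ↑l⁻¹])⁻¹ *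
        (!![(m : R), b; 0, ↑m⁻¹])⁻¹ =
      !![1, m * b * ((l : R) ^ 2 - 1) + l * a * (1 - (m : R) ^ 2); 0, 1] := by
  rw [inv_upperTriangular_units, inv_upperTriangular_units]
  simp only [Matrix.mul_fin_two, EmbeddingLike.apply_eq_iff_eq, Matrix.vecCons_inj, and_true]
  refine ⟨⟨?_, ?_⟩, by ring, ?_⟩
  · linear_combination (m * m⁻¹ : R) * l.mul_inv + m.mul_inv
  · linear_combination -(m * b) * l.mul_inv + l * a * m.mul_inv
  · linear_combination (m * m⁻¹ : R) * l.mul_inv + m.mul_inv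

theorem unitriangular_mul_unitriangular (a b : R) :
    !![1, a; 0, 1] * !![1, b; 0, 1] = !![1, a + b; 0, 1] := by
  simp [add_comm]

theorem list_prod_ofFn_unitriangular : ∀ {n : ℕ} (c : Fin n → R),
    (List.ofFn fun i => !![1, c i; 0, 1]).prod = !![1, ∑ i, c i; 0, 1]
  | 0, _ => by simp [Matrix.one_fin_two]
  | n + 1, c => by
    rw [List.ofFn_succ, List.prod_cons, list_prod_ofFn_unitriangular, Fin.sum_univ_succ,
      unitriangular_mul_unitriangular]

theorem unitriangular_eq_one_iff (s : R) : !![1, s; 0, 1] = 1 ↔ s = 0 := by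
  simp [Matrix.one_fin_two]

end

/-- The ordered product of commutators of upper-triangular matrices in `SL₂(k)`
`A_i = !![λ_i, α_i; 0, λ_i⁻¹]`, `B_i = !![μ_i, β_i; 0, μ_i⁻¹]` equals `!![1, S; 0, 1]` with
`S = Σ_i ( μ_i β_i (λ_i² − 1) + λ_i α_i (1 − μ_i²) )`; in particular it is the identity matrix
if and only if `S = 0`. -/
theorem prod_commutators_upper_triangular (k : Type*) [Field k] (g : ℕ)
    (lam mu : Fin g → kˣ) (al be : Fin g → k) :
    (List.ofFn fun i : Fin g =>
        (!![(lam i : k), al i; 0, ((lam i)⁻¹ : kˣ)] * !![(mu i : k), be i; 0, ((mu i)⁻¹ : kˣ)] *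
          (!![(lam i : k), al i; 0, ((lam i)⁻¹ : kˣ)])⁻¹ *
          (!![(mu i : k), be i; 0, ((mu i)⁻¹ : kˣ)])⁻¹ : Matrix (Fin 2) (Fin 2) k)).prod =
      !![1, ∑ i : Fin g,
            ((mu i : k) * be i * ((lam i : k) ^ 2 - 1) + (lam i : k) * al i * (1 - (mu i : k) ^ 2));
         0, 1] ∧
    ((List.ofFn fun i : Fin g =>
        (!![(lam i : k), al i; 0, ((lam i)⁻¹ : kˣ)] * !![(mu i : k), be i; 0, ((mu i)⁻¹ : kˣ)] *
          (!![(lam i : k), al i; 0, ((lam i)⁻¹ : kˣ)])⁻¹ *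
          (!![(mu i : k), be i; 0, ((mu i)⁻¹ : kˣ)])⁻¹ : Matrix (Fin 2) (Fin 2) k)).prod = 1 ↔
      ∑ i : Fin g,
          ((mu i : k) * be i * ((lam i : k) ^ 2 - 1) + (lam i : k) * al i * (1 - (mu i : k) ^ 2))
        = 0) := by
  simp only [commutator_upperTriangular_units, list_prod_ofFn_unitriangular,
    unitriangular_eq_one_iff, and_self]
end

section
/- Let k be a field of characteristic different from 2, let g ≥ 0 and r ≥ 0, and let A₁, B₁, …, A_g, B_g ∈ SL₂(k) and P₁, …, P_r ∈ SL₂(k) with tr P_j = 2 for every j. If ∏_{i=1}^{g} [A_i, B_i] · ∏_{j=1}^{r} P_j = −I, then there is no nonzero vector v ∈ k² that is simultaneously an eigenvector of every A_i, every B_i and every P_j; that is, every representation in the parabolic representation variety with a puncture of holonomy −I and r punctures of trace-2 Jordan type is irreducible. -/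
/-!
A common eigenvector `v` spans a line stable under every `A i`, `B i`, `P j`. Since scalars
commute, each commutator `[A i, B i]` acts on `v` by the product of its eigenvalues and their
inverses, i.e. fixes `v`; and a trace-2 element of `SL₂` has characteristic polynomial
`(X - 1)²`, so it fixes `v` as well. Hence the left-hand side of the relation fixes `v`, while
`-I` sends `v` to `-v ≠ v` when `2 ≠ 0` in `k`.
-/

section EigenvectorOfCommutator

open scoped commutatorElement

variable {G K M : Type*} [Group G] [Field K] [AddCommGroup M] [Module K M]
  [DistribMulAction G M] [SMulCommClass G K M] {g h : G} {v : M} {a b : K}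

theorem inv_smul_eq_inv_smul_of_smul_eq_smul (hg : g • v = a • v) :
    g⁻¹ • v = a⁻¹ • v := by
  rcases eq_or_ne a 0 with rfl | ha
  · rw [zero_smul, smul_eq_zero_iff_eq] at hg
    simp [hg]
  · rw [inv_smul_eq_iff, smul_comm, hg, inv_smul_smul₀ ha]

theorem commutatorElement_smul_eq_self_of_smul_eq_smul (hg : g • v = a • v)
    (hh : h • v = b • v) : ⁅g, h⁆ • v = v := by
  rcases eq_or_ne v 0 with rfl | hv
  · exact smul_zero _
  have ha : a ≠ 0 := by rintro rfl; simp [smul_eq_zero_iff_eq, hv] at hg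
  have hb : b ≠ 0 := by rintro rfl; simp [smul_eq_zero_iff_eq, hv] at hh
  simp only [commutatorElement_def, mul_smul, inv_smul_eq_inv_smul_of_smul_eq_smul hg,
    inv_smul_eq_inv_smul_of_smul_eq_smul hh, smul_comm (_ : G) (_ : K), hg, hh]
  rw [smul_smul, smul_smul, smul_smul, show b⁻¹ * a⁻¹ * b * a = 1 by field_simp, one_smul]

end EigenvectorOfCommutator

namespace Matrix

variable {n R : Type*} [Fintype n] [DecidableEq n] [CommRing R] [IsDomain R]

theorem isRoot_charpoly_of_mulVec_eq_smul {A : Matrix n n R} {v : n → R} {a : R} (hv : v ≠ 0)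
    (h : A *ᵥ v = a • v) : A.charpoly.IsRoot a := by
  rw [Polynomial.IsRoot, eval_charpoly, ← exists_mulVec_eq_zero_iff]
  refine ⟨v, hv, ?_⟩
  rw [sub_mulVec, h, scalar_apply, ← smul_one_eq_diagonal, smul_mulVec, one_mulVec, sub_self]

theorem SpecialLinearGroup.eq_one_of_smul_eq_smul_of_trace_eq_two
    {A : SpecialLinearGroup (Fin 2) R} (htr : (A : Matrix (Fin 2) (Fin 2) R).trace = 2)
    {v : Fin 2 → R} {a : R} (hv : v ≠ 0) (h : A • v = a • v) : a = 1 := by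
  have hroot := isRoot_charpoly_of_mulVec_eq_smul hv h
  simp only [charpoly_fin_two, htr, SpecialLinearGroup.det_coe, Polynomial.IsRoot,
    Polynomial.eval_add, Polynomial.eval_sub, Polynomial.eval_pow, Polynomial.eval_mul,
    Polynomial.eval_C, Polynomial.eval_X] at hroot
  have : (a - 1) ^ 2 = 0 := by linear_combination hroot
  exact sub_eq_zero.mp (pow_eq_zero_iff two_ne_zero |>.mp this)

end Matrix

/-- In characteristic ≠ 2, if `∏ [A_i,B_i] · ∏ P_j = −I` in `SL₂(k)` with
`tr P_j = 2` for all `j`, then the matrices `A_i, B_i, P_j` have no common eigenvector; i.e.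
every such representation is irreducible. -/
theorem no_common_eigenvector_of_rel_neg_id (k : Type*) [Field k] (hchar : ringChar k ≠ 2)
    (g r : ℕ) (A B : Fin g → Matrix.SpecialLinearGroup (Fin 2) k)
    (P : Fin r → Matrix.SpecialLinearGroup (Fin 2) k)
    (hP : ∀ j, Matrix.trace (P j : Matrix (Fin 2) (Fin 2) k) = 2)
    (hrel : (((List.ofFn fun i : Fin g => A i * B i * (A i)⁻¹ * (B i)⁻¹).prod *
        (List.ofFn fun j : Fin r => P j).prod : Matrix.SpecialLinearGroup (Fin 2) k) :
          Matrix (Fin 2) (Fin 2) k) = -1) :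
    ¬ ∃ v : Fin 2 → k, v ≠ 0 ∧
        (∀ i, ∃ a : k, Matrix.mulVec (A i : Matrix (Fin 2) (Fin 2) k) v = a • v) ∧
        (∀ i, ∃ a : k, Matrix.mulVec (B i : Matrix (Fin 2) (Fin 2) k) v = a • v) ∧
        (∀ j, ∃ a : k, Matrix.mulVec (P j : Matrix (Fin 2) (Fin 2) k) v = a • v) := by
  rintro ⟨v, hv, hA, hB, hPv⟩
  have hcomm (i : Fin g) : A i * B i * (A i)⁻¹ * (B i)⁻¹ ∈ MulAction.stabilizer _ v := by
    obtain ⟨a, ha⟩ := hA i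
    obtain ⟨b, hb⟩ := hB i
    exact commutatorElement_smul_eq_self_of_smul_eq_smul (g := A i) ha hb
  have hunip (j : Fin r) : P j ∈ MulAction.stabilizer _ v := by
    obtain ⟨a, ha⟩ := hPv j
    change P j • v = a • v at ha
    rwa [Matrix.SpecialLinearGroup.eq_one_of_smul_eq_smul_of_trace_eq_two (hP j) hv ha,
      one_smul] at ha
  have hfix : Matrix.mulVec
      (((List.ofFn fun i : Fin g => A i * B i * (A i)⁻¹ * (B i)⁻¹).prod *
        (List.ofFn fun j : Fin r => P j).prod : Matrix.SpecialLinearGroup (Fin 2) k) :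
          Matrix (Fin 2) (Fin 2) k) v = v :=
    mul_mem (list_prod_mem (List.forall_mem_ofFn_iff.mpr hcomm))
      (list_prod_mem (List.forall_mem_ofFn_iff.mpr hunip))
  rw [hrel, Matrix.neg_mulVec, Matrix.one_mulVec, neg_eq_iff_add_eq_zero, ← two_smul k] at hfix
  exact hv ((smul_eq_zero.mp hfix).resolve_left (Ring.two_ne_zero hchar))
end
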